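/- Let M be a monoid, K a field, and let f, g, h, h₁,...,hₙ, g₁,...,gₙ : M → K satisfy f(xy) = g(x)h(y) + Σⱼ₌₁ⁿ gⱼ(x)hⱼ(y) for all x, y ∈ M, where each gⱼ = Σ_{i=nⱼ}^{mⱼ} bᵢμᵢ with μ₁,...,μₘ distinct nonzero multiplicative functions partitioned into n consecutive blocks each of size at least 2, and all bᵢ ≠ 0. If h = 0, then f = 0 and hⱼ = 0 for all j. -/

import Mathlib

/-!
With `h = 0` the equation reads `f (x * y) = ∑ᵢ bᵢ μᵢ(x) h'_{J i}(y)`. Expanding `f (x * y * z)`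
in two ways and using the linear independence of distinct characters (Artin) gives
`h'_{J i}(y * z) = μᵢ(y) h'_{J i}(z)` for every `i`. A block contains two distinct characters
`μᵢ ≠ μₖ` sharing the same `h'ⱼ`, and a nonzero `h'ⱼ` would force `μᵢ = μₖ`; hence `h'ⱼ = 0`,
and then `f = 0` by taking `y = 1`.
-/

section

variable {M K : Type*} [Monoid M] [Field K]

theorem linearIndependent_of_map_mul {ι : Type*} {μ : ι → M → K}
    (hmul : ∀ i x y, μ i (x * y) = μ i x * μ i y) (hinj : Function.Injective μ)
    (hne : ∀ i, μ i ≠ 0) : LinearIndependent K μ := by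
  have map_one : ∀ i, μ i 1 = 1 := fun i => by
    obtain ⟨x, hx⟩ := Function.ne_iff.mp (hne i)
    exact mul_left_cancel₀ hx (by rw [← hmul, mul_one, mul_one])
  let φ : ι → M →* K := fun i => ⟨⟨μ i, map_one i⟩, hmul i⟩
  exact (linearIndependent_monoidHom M K).comp φ
    fun i k hik => hinj (congrArg (fun ψ : M →* K => (ψ : M → K)) hik)

theorem apply_mul_eq_of_apply_mul_eq_sum {ι : Type*} [Fintype ι] {μ : ι → M → K}
    (hmul : ∀ i x y, μ i (x * y) = μ i x * μ i y) (hli : LinearIndependent K μ)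
    {b : ι → K} (hb : ∀ i, b i ≠ 0) {f : M → K} {c : ι → M → K}
    (hf : ∀ x y, f (x * y) = ∑ i, b i * μ i x * c i y) (i : ι) (y z : M) :
    c i (y * z) = μ i y * c i z := by
  have hzero : ∑ k, (b k * (μ k y * c k z - c k (y * z))) • μ k = 0 := by
    funext x
    have hassoc : f (x * y * z) = f (x * (y * z)) := by rw [mul_assoc]
    rw [hf, hf] at hassoc
    simp only [Finset.sum_apply, Pi.smul_apply, smul_eq_mul, Pi.zero_apply, hmul] at hassoc ⊢
    rw [← sub_eq_zero, ← Finset.sum_sub_distrib] at hassoc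
    rw [← hassoc]
    exact Finset.sum_congr rfl fun k _ => by ring
  have hcoef := Fintype.linearIndependent_iff.mp hli _ hzero i
  exact (sub_eq_zero.mp ((mul_eq_zero.mp hcoef).resolve_left (hb i))).symm

theorem eq_zero_of_apply_mul_eq_of_ne {φ ψ c : M → K}
    (hφ : ∀ y z, c (y * z) = φ y * c z) (hψ : ∀ y z, c (y * z) = ψ y * c z) (hφψ : φ ≠ ψ) :
    c = 0 := by
  by_contra hc
  obtain ⟨z, hz⟩ := Function.ne_iff.mp hc
  exact hφψ (funext fun y => mul_right_cancel₀ hz ((hφ y z).symm.trans (hψ y z)))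

theorem sum_fiberwise_mul_eq {ι κ : Type*} [Fintype ι] [Fintype κ] [DecidableEq κ]
    (J : ι → κ) (u : ι → K) (F : κ → K) :
    ∑ j, (∑ i ∈ Finset.univ.filter fun i => J i = j, u i) * F j = ∑ i, u i * F (J i) := by
  rw [← Finset.sum_fiberwise Finset.univ J fun i => u i * F (J i)]
  refine Finset.sum_congr rfl fun j _ => ?_
  rw [Finset.sum_mul]
  exact Finset.sum_congr rfl fun i hi => by rw [(Finset.mem_filter.mp hi).2]

end

theorem stmt_18_general {M : Type*} [Monoid M] {K : Type*} [Field K] {m n : ℕ}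
    (μ : Fin m → M → K)
    (hmul : ∀ i, ∀ x y : M, μ i (x * y) = μ i x * μ i y)
    (hdist : Function.Injective μ) (hne : ∀ i, μ i ≠ 0)
    (b : Fin m → K) (hb : ∀ i, b i ≠ 0)
    (J : Fin m → Fin n)
    (hfib : ∀ j, 2 ≤ (Finset.univ.filter fun i => J i = j).card)
    (gj : Fin n → M → K)
    (hgj : ∀ j, gj j = fun x => ∑ i ∈ Finset.univ.filter fun i => J i = j, b i * μ i x)
    (f g h : M → K) (h' : Fin n → M → K)
    (heq : ∀ x y, f (x * y) = g x * h y + ∑ j, gj j x * h' j y)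
    (hh : h = 0) :
    f = 0 ∧ ∀ j, h' j = 0 := by
  subst hh
  have hred : ∀ x y, f (x * y) = ∑ i, b i * μ i x * h' (J i) y := fun x y => by
    simp only [heq, hgj, Pi.zero_apply, mul_zero, zero_add]
    exact sum_fiberwise_mul_eq J (fun i => b i * μ i x) (fun j => h' j y)
  have hchar := apply_mul_eq_of_apply_mul_eq_sum hmul
    (linearIndependent_of_map_mul hmul hdist hne) hb hred
  have hh' : ∀ j, h' j = 0 := fun j => by
    obtain ⟨i, k, hi, hk, hik⟩ := Finset.one_lt_card_iff.mp (hfib j)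
    rw [Finset.mem_filter] at hi hk
    refine eq_zero_of_apply_mul_eq_of_ne (φ := μ i) (ψ := μ k) ?_ ?_ (hdist.ne hik)
    · simpa only [hi.2] using hchar i
    · simpa only [hk.2] using hchar k
  refine ⟨funext fun x => ?_, hh'⟩
  simpa [hh'] using hred x 1

/-- If `h = 0` in the Levi-Civita equation with each `gⱼ` a block sum of at least
two distinct nonzero multiplicative functions (blocks consecutive), then `f = 0`
and all `hⱼ = 0`. -/
theorem stmt_18 {M : Type*} [Monoid M] {K : Type*} [Field K] {m n : ℕ}
    (μ : Fin m → M → K)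
    (hmul : ∀ i, ∀ x y : M, μ i (x * y) = μ i x * μ i y)
    (hdist : Function.Injective μ) (hne : ∀ i, μ i ≠ 0)
    (b : Fin m → K) (hb : ∀ i, b i ≠ 0)
    (J : Fin m → Fin n) (hJsurj : Function.Surjective J) (hJmono : Monotone J)
    (hfib : ∀ j, 2 ≤ (Finset.univ.filter fun i => J i = j).card)
    (gj : Fin n → M → K)
    (hgj : ∀ j, gj j = fun x => ∑ i ∈ Finset.univ.filter fun i => J i = j, b i * μ i x)
    (f g h : M → K) (h' : Fin n → M → K)
    (heq : ∀ x y, f (x * y) = g x * h y + ∑ j, gj j x * h' j y)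
    (hh : h = 0) :
    f = 0 ∧ ∀ j, h' j = 0 :=
  stmt_18_general μ hmul hdist hne b hb J hfib gj hgj f g h h' heq hh
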